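/- arXiv:2505.04417 — 2 statements merged into one kernel-verified Lean document; each statement's English description precedes it below -/
import Mathlib

section
/- Let A ∈ ℝ^{d×d} satisfy 0 ⪯ A(t) ⪯ (M-m) I for all t ≥ 0, with A(t) having sparsity pattern given by graph G (block (i,j) of A(t) vanishes when i,j non-adjacent). If G(t) solves dG/dt = -A(t) G(t) with G(0) = I, then the (i,j) block satisfies ‖G(t)(i,j)‖ ≤ ∑_{k ≥ d_G(i,j)} t^k (M-m)^k / k!. -/
open Real MeasureTheory Matrix

section aux
variable {ι : Type*} [Fintype ι]

noncomputable def en (v : ι → ℝ) : EuclideanSpace ℝ ι := (WithLp.equiv 2 (ι → ℝ)).symm v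

lemma en_norm_sq (v : ι → ℝ) : ‖en v‖ ^ 2 = ∑ a, v a ^ 2 := by
  rw [EuclideanSpace.norm_eq, Real.sq_sqrt (by positivity)]
  simp [en, sq_abs]

lemma le_of_sq_le_sq' {a b : ℝ} (ha : 0 ≤ a) (hb : 0 ≤ b) (h : a ^ 2 ≤ b ^ 2) : a ≤ b := by
  nlinarith

lemma en_neg (v : ι → ℝ) : en (-v) = - en v := rfl

lemma en_dot (v w : ι → ℝ) : v ⬝ᵥ w ≤ ‖en v‖ * ‖en w‖ := by
  have h := real_inner_le_norm (en v) (en w)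
  rw [PiLp.inner_apply] at h
  simpa [dotProduct, en, RCLike.inner_apply, mul_comm] using h

lemma en_mulVec_diag01 [DecidableEq ι] (d : ι → ℝ) (hd : ∀ a, d a = 0 ∨ d a = 1)
    (v : ι → ℝ) : ‖en (Matrix.diagonal d *ᵥ v)‖ ≤ ‖en v‖ := by
  refine le_of_sq_le_sq' (norm_nonneg _) (norm_nonneg _) ?_
  rw [en_norm_sq, en_norm_sq]
  refine Finset.sum_le_sum fun a _ => ?_
  rw [Matrix.mulVec_diagonal]
  rcases hd a with h | h <;> simp [h] <;> positivity

lemma en_mulVec_psd [DecidableEq ι] {A : Matrix ι ι ℝ} {c : ℝ} (hc : 0 ≤ c)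
    (h1 : A.PosSemidef) (h2 : (c • (1 : Matrix ι ι ℝ) - A).PosSemidef) (v : ι → ℝ) :
    ‖en (A *ᵥ v)‖ ≤ c * ‖en v‖ := by
  obtain ⟨S, hSh, hS⟩ : ∃ S : Matrix ι ι ℝ, Sᴴ = S ∧ S * S = A :=
    open scoped MatrixOrder in
    ⟨CFC.sqrt A, (CFC.sqrt_nonneg A).posSemidef.isHermitian, CFC.sqrt_mul_sqrt_self A h1.nonneg⟩
  have hpsd : (c • A - A * A).PosSemidef := by
    have h3 := h2.mul_mul_conjTranspose_same S
    rw [hSh] at h3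
    convert h3 using 1
    rw [← hS]
    rw [mul_sub, sub_mul, Matrix.mul_smul, mul_one, Matrix.smul_mul]
    congr 1
    simp [mul_assoc]
  have hAt : Aᵀ = A := by
    have := h1.isHermitian
    rwa [Matrix.IsHermitian, Matrix.conjTranspose] at this <;> simpa using this
  have key : (A *ᵥ v) ⬝ᵥ (A *ᵥ v) ≤ c * (v ⬝ᵥ (A *ᵥ v)) := by
    have h4 := hpsd.dotProduct_mulVec_nonneg v
    simp only [star_trivial, Matrix.sub_mulVec, Matrix.smul_mulVec,
      dotProduct_sub, dotProduct_smul, smul_eq_mul, sub_nonneg,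
      ← Matrix.mulVec_mulVec] at h4
    have h5 : v ⬝ᵥ (A *ᵥ (A *ᵥ v)) = (A *ᵥ v) ⬝ᵥ (A *ᵥ v) := by
      rw [Matrix.dotProduct_mulVec, ← Matrix.mulVec_transpose, hAt]
    linarith [h4, h5.le, h5.ge]
  have hdot : v ⬝ᵥ (A *ᵥ v) ≤ ‖en v‖ * ‖en (A *ᵥ v)‖ := en_dot _ _
  have hsq : ‖en (A *ᵥ v)‖ ^ 2 = (A *ᵥ v) ⬝ᵥ (A *ᵥ v) := by
    rw [en_norm_sq]; simp [dotProduct, sq]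
  rcases eq_or_lt_of_le (norm_nonneg (en (A *ᵥ v))) with h0 | h0
  · rw [← h0]; positivity
  · have : ‖en (A *ᵥ v)‖ ^ 2 ≤ c * (‖en v‖ * ‖en (A *ᵥ v)‖) := by
      rw [hsq]; exact key.trans (by nlinarith)
    nlinarith
end aux

/-- Dyson-series tail bound for a linear matrix ODE with localized coefficients:
if `0 ⪯ A(t) ⪯ (M-m)I`, `A(t)` has sparsity pattern given by a graph `G`, and
`dG/dt = -A(t)G(t)`, `G(0) = I`, then `‖G(t)(i,j)‖ ≤ ∑_{k ≥ d_G(i,j)} t^k (M-m)^k / k!`. -/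
theorem stmt_6 (b : ℕ) (dv : Fin b → ℕ) (G : SimpleGraph (Fin b)) [DecidableEq (Fin b)]
    (hconn : G.Preconnected)
    (m M : ℝ) (hm : 0 < m) (hmM : m ≤ M)
    (A Gm : ℝ → Matrix ((i : Fin b) × Fin (dv i)) ((i : Fin b) × Fin (dv i)) ℝ)
    (hA1 : ∀ t, 0 ≤ t → (A t).PosSemidef)
    (hA2 : ∀ t, 0 ≤ t → (((M - m) • (1 : Matrix ((i : Fin b) × Fin (dv i))
        ((i : Fin b) × Fin (dv i)) ℝ)) - A t).PosSemidef)
    -- sparsity pattern: block `(i,j)` of `A(t)` vanishes for non-adjacent `i ≠ j`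
    (hAloc : ∀ t, 0 ≤ t → ∀ i j : Fin b, i ≠ j → ¬ G.Adj i j →
        ∀ (k : Fin (dv i)) (l : Fin (dv j)), A t ⟨i, k⟩ ⟨j, l⟩ = 0)
    (hG0 : Gm 0 = 1)
    (hODE : ∀ t, 0 ≤ t → ∀ a c : (i : Fin b) × Fin (dv i),
        HasDerivAt (fun s => Gm s a c) ((-(A t * Gm t)) a c) t) :
    ∀ t, 0 ≤ t → ∀ i j : Fin b,
      ‖LinearMap.toContinuousLinearMap (Matrix.toEuclideanLin
          (fun (k : Fin (dv i)) (l : Fin (dv j)) => Gm t ⟨i, k⟩ ⟨j, l⟩))‖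
        ≤ ∑' k : ℕ, if G.dist i j ≤ k then t ^ k * (M - m) ^ k / k.factorial else 0 := by
  classical
  intro t ht i j
  set c : ℝ := M - m with hcdef
  have hc0 : (0:ℝ) ≤ c := sub_nonneg.2 hmM
  have hGconn : G.Connected := G.connected_iff.mpr ⟨hconn, ⟨i⟩⟩
  -- the basic diagonal matrices
  set pf : ℕ → ((i : Fin b) × Fin (dv i)) → ℝ := fun n a => if n ≤ G.dist a.1 j then 1 else 0 with hpf
  set P : ℕ → Matrix ((i : Fin b) × Fin (dv i)) ((i : Fin b) × Fin (dv i)) ℝ := fun n => Matrix.diagonal (pf n) with hP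
  set ef : ((i : Fin b) × Fin (dv i)) → ℝ := fun a => if a.1 = j then 1 else 0 with hef
  set Em : Matrix ((i : Fin b) × Fin (dv i)) ((i : Fin b) × Fin (dv i)) ℝ := Matrix.diagonal ef with hEm
  have hent : ∀ (n : ℕ) (X : Matrix ((i : Fin b) × Fin (dv i)) ((i : Fin b) × Fin (dv i)) ℝ) (a c' : (i : Fin b) × Fin (dv i)),
      (P n * X * Em) a c' = pf n a * X a c' * ef c' := by
    intro n X a c'
    rw [Matrix.mul_diagonal, Matrix.diagonal_mul]
  have hcoord : ∀ (Y : Matrix ((i : Fin b) × Fin (dv i)) ((i : Fin b) × Fin (dv i)) ℝ) (x : ((i : Fin b) × Fin (dv i)) → ℝ) (a : (i : Fin b) × Fin (dv i)), (Y *ᵥ x) a = ∑ c', Y a c' * x c' :=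
    fun Y x a => rfl
  -- norm bound on Gm
  have hGm : ∀ s, 0 ≤ s → ∀ y : ((i : Fin b) × Fin (dv i)) → ℝ, ‖en (Gm s *ᵥ y)‖ ≤ ‖en y‖ := by
    intro s hs y
    set f : ℝ → ℝ := fun u => ∑ a, ((Gm u *ᵥ y) a) ^ 2 with hfdef
    have hf' : ∀ u, 0 ≤ u → HasDerivAt f
        (∑ a, (2:ℝ) * ((Gm u *ᵥ y) a) ^ 1 * (((-(A u * Gm u)) *ᵥ y) a)) u := by
      intro u hu
      refine HasDerivAt.fun_sum fun a _ => ?_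
      have h1 : HasDerivAt (fun r => (Gm r *ᵥ y) a) (((-(A u * Gm u)) *ᵥ y) a) u := by
        simp only [hcoord]
        exact HasDerivAt.fun_sum fun c' _ => (hODE u hu a c').mul_const (y c')
      exact h1.pow 2
    have hD : ∀ u, 0 ≤ u → (∑ a, (2:ℝ) * ((Gm u *ᵥ y) a) ^ 1 * (((-(A u * Gm u)) *ᵥ y) a)) ≤ 0 := by
      intro u hu
      have h2 := (hA1 u hu).dotProduct_mulVec_nonneg (Gm u *ᵥ y)
      simp only [star_trivial] at h2
      have h3 : (∑ a, (2:ℝ) * ((Gm u *ᵥ y) a) ^ 1 * (((-(A u * Gm u)) *ᵥ y) a))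
          = -2 * ((Gm u *ᵥ y) ⬝ᵥ (A u *ᵥ (Gm u *ᵥ y))) := by
        rw [Matrix.neg_mulVec, ← Matrix.mulVec_mulVec, dotProduct,
          Finset.mul_sum]
        refine Finset.sum_congr rfl fun a _ => ?_
        simp [Pi.neg_apply]
        ring
      rw [h3]
      linarith [h2]
    have hmono : AntitoneOn f (Set.Icc 0 s) := by
      refine antitoneOn_of_deriv_nonpos (convex_Icc 0 s) ?_ ?_ ?_
      · exact fun u hu => ((hf' u hu.1).continuousAt).continuousWithinAt
      · intro u hu
        rw [interior_Icc] at hu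
        exact ((hf' u hu.1.le).differentiableAt).differentiableWithinAt
      · intro u hu
        rw [interior_Icc] at hu
        rw [(hf' u hu.1.le).deriv]
        exact hD u hu.1.le
    have hfs : f s ≤ f 0 := hmono (Set.left_mem_Icc.2 hs) ⟨hs, le_rfl⟩ hs
    refine le_of_sq_le_sq' (norm_nonneg _) (norm_nonneg _) ?_
    rw [en_norm_sq, en_norm_sq]
    have hf0 : f 0 = ∑ a, y a ^ 2 := by
      simp [hfdef, hG0, Matrix.one_mulVec]
    calc ∑ a, ((Gm s *ᵥ y) a) ^ 2 = f s := rfl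
      _ ≤ f 0 := hfs
      _ = ∑ a, y a ^ 2 := hf0
  -- the sparsity key
  have hPkey : ∀ n : ℕ, ∀ u, 0 ≤ u → P (n+1) * A u = P (n+1) * A u * P n := by
    intro n u hu
    ext a c'
    simp only [hP]
    rw [Matrix.mul_diagonal, Matrix.diagonal_mul]
    by_cases hq : n ≤ G.dist c'.1 j
    · rw [hpf]; simp only [hq, if_true, mul_one]
    · by_cases hp : n + 1 ≤ G.dist a.1 j
      · have hAz : A u a c' = 0 := by
          have hne : a.1 ≠ c'.1 := by
            intro he
            rw [he] at hp
            omega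
          have hnadj : ¬ G.Adj a.1 c'.1 := by
            intro hadj
            have h1 : G.dist a.1 c'.1 ≤ 1 := by
              have := SimpleGraph.dist_le hadj.toWalk
              simpa using this
            have h2 : G.dist a.1 j ≤ G.dist a.1 c'.1 + G.dist c'.1 j :=
              hGconn.dist_triangle
            omega
          have := hAloc u hu a.1 c'.1 hne hnadj a.2 c'.2
          simpa using this
        rw [hAz]
        ring
      · rw [hpf]; simp only [hp, if_false, zero_mul]
  -- main induction
  have key : ∀ n : ℕ, ∀ s, 0 ≤ s → ∀ x : ((i : Fin b) × Fin (dv i)) → ℝ,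
      ‖en ((P n * Gm s * Em) *ᵥ x)‖ ≤ c ^ n * s ^ n / n.factorial * ‖en x‖ := by
    intro n
    induction n with
    | zero =>
      intro s hs x
      have hP0 : P 0 = 1 := by
        simp only [hP, hpf]
        simp
      rw [hP0, one_mul, ← Matrix.mulVec_mulVec]
      have h1 : ‖en (Gm s *ᵥ (Em *ᵥ x))‖ ≤ ‖en (Em *ᵥ x)‖ := hGm s hs _
      have h2 : ‖en (Em *ᵥ x)‖ ≤ ‖en x‖ := by
        rw [hEm]
        refine en_mulVec_diag01 _ (fun a => ?_) x
        rw [hef]; by_cases h : a.1 = j <;> simp [h]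
      simp only [pow_zero, Nat.factorial_zero, Nat.cast_one]
      calc ‖en (Gm s *ᵥ (Em *ᵥ x))‖ ≤ ‖en x‖ := h1.trans h2
        _ = 1 * 1 / 1 * ‖en x‖ := by ring
    | succ n IH =>
      intro s hs x
      set Bf : ℝ → ℝ := fun u => c ^ (n+1) * u ^ (n+1) / (n+1).factorial * ‖en x‖ with hBf
      set B'f : ℝ → ℝ :=
        fun u => c ^ (n+1) * (((n:ℝ)+1) * u ^ n) / ((n+1).factorial : ℝ) * ‖en x‖ with hB'f
      have hderiv : ∀ u, 0 ≤ u → HasDerivAt (fun r => en ((P (n+1) * Gm r * Em) *ᵥ x))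
          (en ((P (n+1) * (-(A u * Gm u)) * Em) *ᵥ x)) u := by
        intro u hu
        have hpi : HasDerivAt (fun r => (P (n+1) * Gm r * Em) *ᵥ x)
            ((P (n+1) * (-(A u * Gm u)) * Em) *ᵥ x) u := by
          rw [hasDerivAt_pi]
          intro a
          simp only [hcoord, hent]
          refine HasDerivAt.fun_sum fun c' _ => ?_
          exact (((hODE u hu a c').const_mul (pf (n+1) a)).mul_const (ef c')).mul_const (x c')
        exact ((PiLp.continuousLinearEquiv 2 ℝ
          (fun _ : ((i : Fin b) × Fin (dv i)) => ℝ)).symm.toContinuousLinearMap.hasFDerivAt).comp_hasDerivAt u hpi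
      have hB : ∀ u, HasDerivAt Bf (B'f u) u := by
        intro u
        have h := (((hasDerivAt_pow (n+1) u).const_mul
          (c ^ (n+1))).div_const (((n+1).factorial : ℝ))).mul_const ‖en x‖
        have he : c ^ (n+1) * ((↑(n+1):ℝ) * u ^ (n+1-1)) / ((n+1).factorial : ℝ) * ‖en x‖
            = B'f u := by
          rw [hB'f]
          push_cast [Nat.add_sub_cancel]
          ring
        rw [hBf, ← he]
        exact h
      have hbound : ∀ u ∈ Set.Ico 0 s,
          ‖en ((P (n+1) * (-(A u * Gm u)) * Em) *ᵥ x)‖ ≤ B'f u := by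
        intro u hu
        have hmm1 : P (n+1) * (-(A u * Gm u)) * Em
            = -((P (n+1) * A u) * (P n * Gm u * Em)) := by
          rw [mul_neg, neg_mul]
          congr 1
          conv_lhs => rw [← mul_assoc, hPkey n u hu.1]
          simp only [mul_assoc]
        rw [hmm1, Matrix.neg_mulVec, en_neg, norm_neg, ← Matrix.mulVec_mulVec,
          ← Matrix.mulVec_mulVec]
        set z := (P n * Gm u * Em) *ᵥ x with hz
        have s1 : ‖en (P (n+1) *ᵥ (A u *ᵥ z))‖ ≤ ‖en (A u *ᵥ z)‖ := by
          rw [hP]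
          refine en_mulVec_diag01 _ (fun a => ?_) _
          rw [hpf]; by_cases h : n + 1 ≤ G.dist a.1 j <;> simp [h]
        have s2 : ‖en (A u *ᵥ z)‖ ≤ c * ‖en z‖ :=
          en_mulVec_psd hc0 (hA1 u hu.1) (hA2 u hu.1) z
        have s3 : ‖en z‖ ≤ c ^ n * u ^ n / n.factorial * ‖en x‖ := IH u hu.1 x
        have s4 : c * ‖en z‖ ≤ c * (c ^ n * u ^ n / n.factorial * ‖en x‖) :=
          mul_le_mul_of_nonneg_left s3 hc0
        refine (s1.trans (s2.trans s4)).trans (le_of_eq ?_)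
        rw [hB'f]
        have hfact : ((n+1).factorial : ℝ) = ((n:ℝ)+1) * (n.factorial : ℝ) := by
          rw [Nat.factorial_succ]; push_cast; ring
        rw [hfact]
        have h1 : (n.factorial : ℝ) ≠ 0 := Nat.cast_ne_zero.2 n.factorial_ne_zero
        have h2 : ((n:ℝ)+1) ≠ 0 := by positivity
        field_simp
        ring
      have hw0 : (P (n+1) * Gm 0 * Em) *ᵥ x = 0 := by
        have h0 : P (n+1) * Gm 0 * Em = 0 := by
          rw [hG0, mul_one, hP, hEm, Matrix.diagonal_mul_diagonal]
          have : (fun a => pf (n+1) a * ef a) = fun _ => (0:ℝ) := by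
            funext a
            rw [hpf, hef]
            by_cases h : a.1 = j
            · have hd : G.dist a.1 j = 0 := by rw [h]; exact SimpleGraph.dist_self
              simp [h, hd, SimpleGraph.dist_self]
            · simp [h]
          rw [this]
          exact Matrix.diagonal_zero
        rw [h0, Matrix.zero_mulVec]
      have ha0 : ‖en ((P (n+1) * Gm 0 * Em) *ᵥ x)‖ ≤ Bf 0 := by
        rw [hw0, hBf]
        have : ‖en (0 : ((i : Fin b) × Fin (dv i)) → ℝ)‖ = 0 := by
          refine le_antisymm ?_ (norm_nonneg _)
          refine le_of_sq_le_sq' (norm_nonneg _) le_rfl ?_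
          rw [en_norm_sq]; simp
        rw [this]
        simp [zero_pow (Nat.succ_ne_zero n)]
      have happ := image_norm_le_of_norm_deriv_right_le_deriv_boundary
        (f := fun r => en ((P (n+1) * Gm r * Em) *ᵥ x))
        (f' := fun u => en ((P (n+1) * (-(A u * Gm u)) * Em) *ᵥ x))
        (fun u hu => ((hderiv u hu.1).continuousAt).continuousWithinAt)
        (fun u hu => (hderiv u hu.1).hasDerivWithinAt)
        ha0 hB hbound (Set.right_mem_Icc.2 hs)
      exact happ
  -- conclusion
  have hnn : ∀ k : ℕ, (0:ℝ) ≤ t ^ k * c ^ k / k.factorial := fun k =>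
    div_nonneg (mul_nonneg (pow_nonneg ht k) (pow_nonneg hc0 k)) (Nat.cast_nonneg _)
  set d := G.dist i j with hd
  have hsum : Summable (fun k : ℕ => if d ≤ k then t ^ k * c ^ k / k.factorial else 0) := by
    refine Summable.of_nonneg_of_le (fun k => ?_) (fun k => ?_)
      (Real.summable_pow_div_factorial (t * c))
    · split
      · exact hnn k
      · exact le_rfl
    · split
      · rw [mul_pow]
      · positivity
  refine le_trans ?_ (Summable.le_tsum hsum d fun k _ => ?_)
  swap
  · split
    · exact hnn k
    · exact le_rfl
  rw [if_pos le_rfl]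
  refine ContinuousLinearMap.opNorm_le_bound _ (hnn d) fun v => ?_
  set v' : Fin (dv j) → ℝ := fun l => v l with hv'
  set x : ((i : Fin b) × Fin (dv i)) → ℝ :=
    fun a => if h : a.1 = j then v' (h ▸ a.2) else 0 with hx
  have hxj : ∀ l : Fin (dv j), x ⟨j, l⟩ = v' l := fun l => dif_pos rfl
  have hxo : ∀ a : (i : Fin b) × Fin (dv i), a.1 ≠ j → x a = 0 := fun a h => dif_neg h
  have hx_norm : ‖en x‖ = ‖v‖ := by
    have h1 : ‖en x‖ ^ 2 = ‖v‖ ^ 2 := by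
      rw [en_norm_sq, EuclideanSpace.norm_eq, Real.sq_sqrt (by positivity)]
      rw [← Finset.univ_sigma_univ, Finset.sum_sigma]
      rw [Finset.sum_eq_single j (fun i' _ hne => Finset.sum_eq_zero fun k _ => by
          rw [hxo ⟨i', k⟩ hne]; ring)
        (fun h => absurd (Finset.mem_univ j) h)]
      refine Finset.sum_congr rfl fun l _ => ?_
      rw [hxj l]
      rw [Real.norm_eq_abs, sq_abs]
    have h2 := le_of_sq_le_sq' (norm_nonneg _) (norm_nonneg _) h1.le
    have h3 := le_of_sq_le_sq' (norm_nonneg _) (norm_nonneg _) h1.ge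
    exact le_antisymm h2 h3
  set w := (P d * Gm t * Em) *ᵥ x with hwdef
  have hcw : ∀ k : Fin (dv i), w ⟨i, k⟩ = ∑ l, Gm t ⟨i, k⟩ ⟨j, l⟩ * v' l := by
    intro k
    rw [hwdef, hcoord]
    rw [← Finset.univ_sigma_univ, Finset.sum_sigma]
    rw [Finset.sum_eq_single j (fun i' _ hne => Finset.sum_eq_zero fun l _ => by
        rw [hent, hxo ⟨i', l⟩ hne]; ring)
      (fun h => absurd (Finset.mem_univ j) h)]
    refine Finset.sum_congr rfl fun l _ => ?_
    rw [hent, hxj l]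
    have e1 : pf d ⟨i, k⟩ = 1 := by rw [hpf]; simp [← hd]
    have e2 : ef ⟨j, l⟩ = 1 := by rw [hef]; simp
    rw [e1, e2]
    ring
  have happly : ∀ k : Fin (dv i),
      ((Matrix.toEuclideanLin (fun (k : Fin (dv i)) (l : Fin (dv j)) => Gm t ⟨i, k⟩ ⟨j, l⟩)) v) k
        = ∑ l, Gm t ⟨i, k⟩ ⟨j, l⟩ * v' l := fun k => rfl
  have hle : ‖(Matrix.toEuclideanLin
      (fun (k : Fin (dv i)) (l : Fin (dv j)) => Gm t ⟨i, k⟩ ⟨j, l⟩)) v‖ ≤ ‖en w‖ := by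
    refine le_of_sq_le_sq' (norm_nonneg _) (norm_nonneg _) ?_
    rw [EuclideanSpace.norm_eq, Real.sq_sqrt (by positivity), en_norm_sq]
    calc ∑ k, ‖((Matrix.toEuclideanLin
          (fun (k : Fin (dv i)) (l : Fin (dv j)) => Gm t ⟨i, k⟩ ⟨j, l⟩)) v) k‖ ^ 2
        = ∑ k, w ⟨i, k⟩ ^ 2 := by
          refine Finset.sum_congr rfl fun k _ => ?_
          rw [happly k, hcw k, Real.norm_eq_abs, sq_abs]
      _ ≤ ∑ a : (i : Fin b) × Fin (dv i), w a ^ 2 := by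
          rw [← Finset.univ_sigma_univ, Finset.sum_sigma]
          exact Finset.single_le_sum (f := fun i' => ∑ k, w ⟨i', k⟩ ^ 2)
            (fun i' _ => Finset.sum_nonneg fun k _ => sq_nonneg _) (Finset.mem_univ i)
  have hkey := key d t ht x
  calc ‖LinearMap.toContinuousLinearMap (Matrix.toEuclideanLin
        (fun (k : Fin (dv i)) (l : Fin (dv j)) => Gm t ⟨i, k⟩ ⟨j, l⟩)) v‖
      = ‖(Matrix.toEuclideanLin
        (fun (k : Fin (dv i)) (l : Fin (dv j)) => Gm t ⟨i, k⟩ ⟨j, l⟩)) v‖ := rfl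
    _ ≤ ‖en w‖ := hle
    _ ≤ c ^ d * t ^ d / d.factorial * ‖en x‖ := hkey
    _ = t ^ d * c ^ d / d.factorial * ‖v‖ := by rw [hx_norm]; ring
end

section
/- Let p_t(x_t) = ∫ N(x_t; α_t x_0, σ_t² I) p_0(x_0) dx_0 and let V = N_j^r be a set of coordinate blocks containing block j. Then the conditional expectation of the j-th score component given x_{t,V} equals the j-th score of the marginal: E_{x_t' ∼ p_t}[∇_j log p_t(x_t') | x'_{t,V} = x_{t,V}] = ∇_j log p_t(x_{t,V}), where p_t(x_{t,V}) denotes the marginal density of x_{t,V} under p_t. -/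
open Real MeasureTheory


lemma aux_abs_mul_exp_le {s : ℝ} (hs : 0 < s) (u : ℝ) :
    |u| * Real.exp (-u ^ 2 / (2 * s)) ≤ Real.sqrt s := by
  have hr : 0 < Real.sqrt s := Real.sqrt_pos.2 hs
  have hr2 : Real.sqrt s ^ 2 = s := Real.sq_sqrt hs.le
  have h1 : 1 + u ^ 2 / (2 * s) ≤ Real.exp (u ^ 2 / (2 * s)) := Real.add_one_le_exp _ |>.trans_eq' (by ring_nf)
  have hexp : Real.exp (-u ^ 2 / (2 * s)) = (Real.exp (u ^ 2 / (2 * s)))⁻¹ := by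
    rw [← Real.exp_neg]; ring_nf
  have hpos : 0 < Real.exp (u ^ 2 / (2 * s)) := Real.exp_pos _
  rw [hexp, mul_inv_le_iff₀ hpos]
  have h3 : |u| ^ 2 = u ^ 2 := sq_abs u
  have key : |u| ≤ Real.sqrt s * (1 + u ^ 2 / (2 * s)) := by
    rw [← mul_le_mul_iff_left₀ (show (0:ℝ) < 2 * Real.sqrt s by positivity)]
    have e2 : Real.sqrt s * (1 + u ^ 2 / (2 * s)) * (2 * Real.sqrt s) = 2 * s + u ^ 2 := by
      field_simp; nlinarith [hr2]
    rw [e2]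
    nlinarith [sq_nonneg (Real.sqrt s - |u|), hr2, h3]
  exact key.trans (by nlinarith [hr.le, h1, Real.exp_pos (u ^ 2 / (2 * s))])

lemma aux_hasFDerivAt_integrand (n : ℕ) {σ2 : ℝ} (hs : 0 < σ2) (c P B : ℝ) (d y' : Fin n → ℝ) :
    HasFDerivAt (fun w : Fin n → ℝ => c * Real.exp (-((∑ i, (w i - d i) ^ 2) + B) / (2 * σ2)) * P)
      ((c * Real.exp (-((∑ i, (y' i - d i) ^ 2) + B) / (2 * σ2)) * P) •
        ∑ i, (-(y' i - d i) / σ2) • ContinuousLinearMap.proj (R := ℝ) (φ := fun _ : Fin n => ℝ) i)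
      y' := by
  have hSa : HasFDerivAt (fun w : Fin n → ℝ => ∑ i, (w i - d i) ^ 2)
      (∑ i, (2 * (y' i - d i)) • ContinuousLinearMap.proj (R := ℝ) (φ := fun _ : Fin n => ℝ) i)
      y' := by
    apply HasFDerivAt.fun_sum
    intro i _
    have hproj : HasFDerivAt (fun w : Fin n → ℝ => w i)
        (ContinuousLinearMap.proj (R := ℝ) (φ := fun _ : Fin n => ℝ) i) y' :=
      (ContinuousLinearMap.proj (R := ℝ) (φ := fun _ : Fin n => ℝ) i).hasFDerivAt
    have h := (hproj.sub_const (d i)).fun_mul (hproj.sub_const (d i))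
    have heq : (fun w : Fin n → ℝ => (w i - d i) ^ 2) = fun w => (w i - d i) * (w i - d i) := by
      funext w; ring
    rw [heq]
    refine h.congr_fderiv ?_
    ext v
    simp only [ContinuousLinearMap.add_apply, ContinuousLinearMap.smul_apply,
      ContinuousLinearMap.proj_apply, smul_eq_mul]
    ring
  have hE : HasFDerivAt (fun w : Fin n → ℝ => -((∑ i, (w i - d i) ^ 2) + B) / (2 * σ2))
      ((-(2 * σ2)⁻¹) • ∑ i, (2 * (y' i - d i)) •
        ContinuousLinearMap.proj (R := ℝ) (φ := fun _ : Fin n => ℝ) i) y' := by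
    have h := (hSa.add_const B).const_mul (-(2 * σ2)⁻¹)
    have heq : (fun w : Fin n → ℝ => -((∑ i, (w i - d i) ^ 2) + B) / (2 * σ2))
        = fun w => (-(2 * σ2)⁻¹) * ((∑ i, (w i - d i) ^ 2) + B) := by
      funext w; field_simp
    rw [heq]; exact h
  have h2 := (hE.exp.const_mul c).mul_const P
  refine (h2.congr_fderiv ?_).congr_fderiv rfl
  symm
  ext v
  simp only [ContinuousLinearMap.smul_apply, ContinuousLinearMap.coe_sum',
    Finset.sum_apply, ContinuousLinearMap.proj_apply, smul_eq_mul, Finset.mul_sum]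
  apply Finset.sum_congr rfl
  intro i _
  have hne : σ2 ≠ 0 := ne_of_gt hs
  field_simp

lemma aux_norm_le (n : ℕ) {σ2 : ℝ} (hs : 0 < σ2) {c P : ℝ} (B : ℝ) (hc : 0 ≤ c) (hP : 0 ≤ P)
    (d y' : Fin n → ℝ) :
    ‖(c * Real.exp (-((∑ i, (y' i - d i) ^ 2) + B) / (2 * σ2)) * P) •
        ∑ i, (-(y' i - d i) / σ2) • ContinuousLinearMap.proj (R := ℝ) (φ := fun _ : Fin n => ℝ) i‖
      ≤ ((n : ℝ) * Real.sqrt σ2 / σ2) * (c * (Real.exp (-B / (2 * σ2)) * P)) := by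
  have hterm : ∀ i : Fin n, |y' i - d i| * Real.exp (-((∑ k, (y' k - d k) ^ 2) + B) / (2 * σ2))
      ≤ Real.sqrt σ2 * Real.exp (-B / (2 * σ2)) := by
    intro i
    have hSa_ge : (y' i - d i) ^ 2 ≤ ∑ k, (y' k - d k) ^ 2 :=
      Finset.single_le_sum (f := fun k => (y' k - d k) ^ 2) (fun k _ => sq_nonneg _)
        (Finset.mem_univ i)
    have h1 : Real.exp (-((∑ k, (y' k - d k) ^ 2) + B) / (2 * σ2))
        ≤ Real.exp (-(y' i - d i) ^ 2 / (2 * σ2)) * Real.exp (-B / (2 * σ2)) := by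
      rw [← Real.exp_add]
      apply Real.exp_le_exp.2
      rw [← add_div]
      apply div_le_div_of_nonneg_right ?_ ?_ |>.trans_eq rfl
      · linarith
      · positivity
    calc |y' i - d i| * Real.exp (-((∑ k, (y' k - d k) ^ 2) + B) / (2 * σ2))
        ≤ |y' i - d i| * (Real.exp (-(y' i - d i) ^ 2 / (2 * σ2)) * Real.exp (-B / (2 * σ2))) :=
          mul_le_mul_of_nonneg_left h1 (abs_nonneg _)
      _ = (|y' i - d i| * Real.exp (-(y' i - d i) ^ 2 / (2 * σ2))) * Real.exp (-B / (2 * σ2)) := by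
          ring
      _ ≤ Real.sqrt σ2 * Real.exp (-B / (2 * σ2)) :=
          mul_le_mul_of_nonneg_right (aux_abs_mul_exp_le hs _) (Real.exp_pos _).le
  have hnormsum : ‖∑ i, (-(y' i - d i) / σ2) •
      ContinuousLinearMap.proj (R := ℝ) (φ := fun _ : Fin n => ℝ) i‖
      ≤ ∑ i, |y' i - d i| / σ2 := by
    refine (norm_sum_le _ _).trans (Finset.sum_le_sum fun i _ => ?_)
    rw [norm_smul (-(y' i - d i) / σ2)
      (ContinuousLinearMap.proj (R := ℝ) (φ := fun _ : Fin n => ℝ) i)]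
    have hp1 : ‖ContinuousLinearMap.proj (R := ℝ) (φ := fun _ : Fin n => ℝ) i‖ ≤ 1 := by
      refine ContinuousLinearMap.opNorm_le_bound _ zero_le_one fun x => ?_
      rw [one_mul]
      exact norm_le_pi_norm x i
    calc ‖(-(y' i - d i) / σ2)‖ * ‖ContinuousLinearMap.proj (R := ℝ) (φ := fun _ : Fin n => ℝ) i‖
        ≤ ‖(-(y' i - d i) / σ2)‖ * 1 := mul_le_mul_of_nonneg_left hp1 (norm_nonneg _)
      _ = |y' i - d i| / σ2 := by
          rw [mul_one, Real.norm_eq_abs, abs_div, abs_neg, abs_of_pos hs]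
  rw [norm_smul (c * Real.exp (-((∑ i, (y' i - d i) ^ 2) + B) / (2 * σ2)) * P)
    (∑ i, (-(y' i - d i) / σ2) • ContinuousLinearMap.proj (R := ℝ) (φ := fun _ : Fin n => ℝ) i)]
  set X := -((∑ i, (y' i - d i) ^ 2) + B) / (2 * σ2) with hX
  have hXn : ‖c * Real.exp X * P‖ = c * Real.exp X * P := by
    rw [Real.norm_eq_abs, abs_of_nonneg (by positivity)]
  rw [hXn]
  calc (c * Real.exp X * P) * ‖∑ i, (-(y' i - d i) / σ2) •
        ContinuousLinearMap.proj (R := ℝ) (φ := fun _ : Fin n => ℝ) i‖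
      ≤ (c * Real.exp X * P) * ∑ i, |y' i - d i| / σ2 :=
        mul_le_mul_of_nonneg_left hnormsum (by positivity)
    _ = ∑ i : Fin n, (c * P / σ2) * (|y' i - d i| * Real.exp X) := by
        rw [Finset.mul_sum]
        refine Finset.sum_congr rfl fun i _ => ?_
        field_simp
    _ ≤ ∑ i : Fin n, (c * P / σ2) * (Real.sqrt σ2 * Real.exp (-B / (2 * σ2))) := by
        refine Finset.sum_le_sum fun i _ => ?_
        exact mul_le_mul_of_nonneg_left (hterm i) (by positivity)
    _ = ((n : ℝ) * Real.sqrt σ2 / σ2) * (c * (Real.exp (-B / (2 * σ2)) * P)) := by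
        rw [Finset.sum_const, Finset.card_univ, Fintype.card_fin, nsmul_eq_mul]
        field_simp

lemma aux_gauss_rw (n : ℕ) {s : ℝ} (hs : 0 < s) (c0 : Fin n → ℝ) :
    (fun z : Fin n → ℝ => Real.exp (-(∑ i, (z i - c0 i) ^ 2) / (2 * s)))
      = fun z => ∏ i, Real.exp (-(z i - c0 i) ^ 2 / (2 * s)) := by
  funext z
  rw [← Real.exp_sum]
  congr 1
  rw [← Finset.sum_div, ← Finset.sum_neg_distrib]

lemma aux_gauss_1d_integrable {s : ℝ} (hs : 0 < s) (m : ℝ) :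
    Integrable (fun u : ℝ => Real.exp (-(u - m) ^ 2 / (2 * s))) := by
  have h : Integrable (fun u : ℝ => Real.exp (-(1 / (2 * s)) * u ^ 2)) :=
    integrable_exp_neg_mul_sq (by positivity)
  have h2 := h.comp_sub_right m
  refine h2.congr ?_
  filter_upwards with u
  congr 1
  field_simp

lemma aux_gauss_integrable (n : ℕ) {s : ℝ} (hs : 0 < s) (c0 : Fin n → ℝ) :
    Integrable (fun z : Fin n → ℝ => Real.exp (-(∑ i, (z i - c0 i) ^ 2) / (2 * s))) := by
  rw [aux_gauss_rw n hs c0]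
  exact Integrable.fintype_prod (f := fun i u => Real.exp (-(u - c0 i) ^ 2 / (2 * s)))
    fun i => aux_gauss_1d_integrable hs (c0 i)

lemma aux_gauss_integral (n : ℕ) {s : ℝ} (hs : 0 < s) (c0 : Fin n → ℝ) :
    ∫ z : Fin n → ℝ, Real.exp (-(∑ i, (z i - c0 i) ^ 2) / (2 * s))
      = (∫ u : ℝ, Real.exp (-u ^ 2 / (2 * s))) ^ n := by
  rw [aux_gauss_rw n hs c0]
  rw [MeasureTheory.integral_fintype_prod_volume_eq_prod (f := fun i u => Real.exp (-(u - c0 i) ^ 2 / (2 * s)))]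
  have : ∀ i : Fin n, ∫ u : ℝ, Real.exp (-(u - c0 i) ^ 2 / (2 * s))
      = ∫ u : ℝ, Real.exp (-u ^ 2 / (2 * s)) := by
    intro i
    exact MeasureTheory.integral_sub_right_eq_self (fun u => Real.exp (-u ^ 2 / (2 * s))) (c0 i)
  simp only [this, Finset.prod_const, Finset.card_univ, Fintype.card_fin]

section Inner

variable {a bb : ℕ} {α σ2 c : ℝ}

local notation "W" => (Fin a → ℝ) × (Fin bb → ℝ)

lemma aux_contSa (v : Fin a → ℝ) :
    Continuous (fun x0 : W => ∑ i, (v i - α * x0.1 i) ^ 2) := by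
  apply continuous_finset_sum
  intro i _
  exact ((continuous_const.sub
    (continuous_const.mul ((continuous_apply i).comp continuous_fst))).pow 2)

lemma aux_contSb (z : Fin bb → ℝ) :
    Continuous (fun x0 : W => ∑ i, (z i - α * x0.2 i) ^ 2) := by
  apply continuous_finset_sum
  intro i _
  exact ((continuous_const.sub
    (continuous_const.mul ((continuous_apply i).comp continuous_snd))).pow 2)

lemma aux_exp_le_one {σ2 : ℝ} (hs : 0 < σ2) {A : ℝ} (hA : 0 ≤ A) :
    Real.exp (-A / (2 * σ2)) ≤ 1 := by
  rw [Real.exp_le_one_iff]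
  apply div_nonpos_of_nonpos_of_nonneg <;> [linarith; positivity]

lemma aux_integrable_F (hs : 0 < σ2) (hc : 0 < c)
    (p0 : W → ℝ) (hp0pos : ∀ x, 0 < p0 x) (hp0int : Integrable p0)
    (z : Fin bb → ℝ) (w : Fin a → ℝ) :
    Integrable (fun x0 : W =>
      c * Real.exp (-((∑ i, (w i - α * x0.1 i) ^ 2) + ∑ i, (z i - α * x0.2 i) ^ 2) / (2 * σ2))
        * p0 x0) := by
  apply (hp0int.const_mul c).mono'
  · exact ((continuous_const.mul
      ((Real.continuous_exp.comp (((aux_contSa w).add (aux_contSb z)).neg.div_const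
        (2 * σ2))))).aestronglyMeasurable).mul hp0int.1
  · filter_upwards with x0
    have h1 : 0 ≤ ∑ i, (w i - α * x0.1 i) ^ 2 := Finset.sum_nonneg fun i _ => sq_nonneg _
    have h2 : 0 ≤ ∑ i, (z i - α * x0.2 i) ^ 2 := Finset.sum_nonneg fun i _ => sq_nonneg _
    have hexp := aux_exp_le_one hs (by linarith : (0:ℝ) ≤ (∑ i, (w i - α * x0.1 i) ^ 2) + ∑ i, (z i - α * x0.2 i) ^ 2)
    have hp := (hp0pos x0).le
    rw [Real.norm_eq_abs, abs_of_nonneg (by positivity)]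
    calc c * Real.exp (-((∑ i, (w i - α * x0.1 i) ^ 2) + ∑ i, (z i - α * x0.2 i) ^ 2) / (2 * σ2)) * p0 x0
        ≤ c * 1 * p0 x0 := by
          apply mul_le_mul_of_nonneg_right _ (hp0pos x0).le
          exact mul_le_mul_of_nonneg_left hexp hc.le
      _ = c * p0 x0 := by ring

lemma aux_bound_int (hs : 0 < σ2) (hc : 0 < c)
    (p0 : W → ℝ) (hp0pos : ∀ x, 0 < p0 x) (hp0int : Integrable p0)
    (z : Fin bb → ℝ) :
    Integrable (fun x0 : W =>
      c * (Real.exp (-(∑ i, (z i - α * x0.2 i) ^ 2) / (2 * σ2)) * p0 x0)) := by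
  apply (hp0int.const_mul c).mono'
  · exact (((Real.continuous_exp.comp
      ((aux_contSb z).neg.div_const (2 * σ2))).aestronglyMeasurable).mul
      hp0int.1).const_mul c
  · filter_upwards with x0
    have h2 : 0 ≤ ∑ i, (z i - α * x0.2 i) ^ 2 := Finset.sum_nonneg fun i _ => sq_nonneg _
    have hexp := aux_exp_le_one hs h2
    have hp := (hp0pos x0).le
    rw [Real.norm_eq_abs, abs_of_nonneg (by positivity)]
    calc c * (Real.exp (-(∑ i, (z i - α * x0.2 i) ^ 2) / (2 * σ2)) * p0 x0)
        ≤ c * (1 * p0 x0) := by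
          apply mul_le_mul_of_nonneg_left _ hc.le
          exact mul_le_mul_of_nonneg_right hexp hp
      _ = c * p0 x0 := by ring

lemma aux_inner (hs : 0 < σ2) (hc : 0 < c)
    (p0 : W → ℝ) (hp0pos : ∀ x, 0 < p0 x) (hp0int : Integrable p0)
    (z : Fin bb → ℝ) (w : Fin a → ℝ) :
    Integrable (fun x0 : W =>
      (c * Real.exp (-((∑ i, (w i - α * x0.1 i) ^ 2) + ∑ i, (z i - α * x0.2 i) ^ 2) / (2 * σ2))
          * p0 x0) •
        ∑ i, (-(w i - α * x0.1 i) / σ2) •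
          ContinuousLinearMap.proj (R := ℝ) (φ := fun _ : Fin a => ℝ) i)
    ∧ HasFDerivAt (fun y' : Fin a → ℝ => ∫ x0 : W,
        c * Real.exp (-((∑ i, (y' i - α * x0.1 i) ^ 2) + ∑ i, (z i - α * x0.2 i) ^ 2) / (2 * σ2))
          * p0 x0)
      (∫ x0 : W,
        (c * Real.exp (-((∑ i, (w i - α * x0.1 i) ^ 2) + ∑ i, (z i - α * x0.2 i) ^ 2) / (2 * σ2))
            * p0 x0) •
          ∑ i, (-(w i - α * x0.1 i) / σ2) •
            ContinuousLinearMap.proj (R := ℝ) (φ := fun _ : Fin a => ℝ) i) w := by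
  have key := hasFDerivAt_integral_of_dominated_loc_of_lip
    (F := fun (y' : Fin a → ℝ) (x0 : W) =>
      c * Real.exp (-((∑ i, (y' i - α * x0.1 i) ^ 2) + ∑ i, (z i - α * x0.2 i) ^ 2) / (2 * σ2))
        * p0 x0)
    (F' := fun x0 : W =>
      (c * Real.exp (-((∑ i, (w i - α * x0.1 i) ^ 2) + ∑ i, (z i - α * x0.2 i) ^ 2) / (2 * σ2))
          * p0 x0) •
        ∑ i, (-(w i - α * x0.1 i) / σ2) •
          ContinuousLinearMap.proj (R := ℝ) (φ := fun _ : Fin a => ℝ) i)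
    (x₀ := w)
    (bound := fun x0 : W => ((a : ℝ) * Real.sqrt σ2 / σ2) *
      (c * (Real.exp (-(∑ i, (z i - α * x0.2 i) ^ 2) / (2 * σ2)) * p0 x0)))
    (μ := volume) (s := Metric.ball w 1) (Metric.ball_mem_nhds w one_pos)
    ?_ ?_ ?_ ?_ ?_ ?_
  · exact key
  · -- hF_meas
    filter_upwards with y'
    exact ((continuous_const.mul
      ((Real.continuous_exp.comp (((aux_contSa y').add (aux_contSb z)).neg.div_const
        (2 * σ2))))).aestronglyMeasurable).mul hp0int.1
  · exact aux_integrable_F hs hc p0 hp0pos hp0int z w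
  · -- hF'_meas
    have hcont : Continuous (fun x0 : W => ∑ i, (-(w i - α * x0.1 i) / σ2) •
        ContinuousLinearMap.proj (R := ℝ) (φ := fun _ : Fin a => ℝ) i) := by
      apply continuous_finset_sum
      intro i _
      exact Continuous.smul (by fun_prop :
          Continuous fun x0 : W => -(w i - α * x0.1 i) / σ2)
        continuous_const
    exact (((continuous_const.mul
      ((Real.continuous_exp.comp (((aux_contSa w).add (aux_contSb z)).neg.div_const
        (2 * σ2))))).aestronglyMeasurable).mul hp0int.1).smul hcont.aestronglyMeasurable
  · -- h_lip
    filter_upwards with x0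
    apply (convex_ball w 1).lipschitzOnWith_of_nnnorm_hasFDerivWithin_le
      (f' := fun y' : Fin a → ℝ =>
        (c * Real.exp (-((∑ i, (y' i - α * x0.1 i) ^ 2) + ∑ i, (z i - α * x0.2 i) ^ 2) / (2 * σ2))
            * p0 x0) •
          ∑ i, (-(y' i - α * x0.1 i) / σ2) •
            ContinuousLinearMap.proj (R := ℝ) (φ := fun _ : Fin a => ℝ) i)
    · intro y' hy'
      exact (aux_hasFDerivAt_integrand a hs c (p0 x0) (∑ i, (z i - α * x0.2 i) ^ 2)
        (fun i => α * x0.1 i) y').hasFDerivWithinAt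
    · intro y' hy'
      rw [← NNReal.coe_le_coe, coe_nnnorm, Real.coe_nnabs]
      refine (aux_norm_le a hs (∑ i, (z i - α * x0.2 i) ^ 2) hc.le (hp0pos x0).le
        (fun i => α * x0.1 i) y').trans (le_abs_self _)
  · -- bound integrable
    apply Integrable.const_mul
    apply (hp0int.const_mul c).mono'
    · exact (((Real.continuous_exp.comp
        ((aux_contSb z).neg.div_const (2 * σ2))).aestronglyMeasurable).mul
        hp0int.1).const_mul c
    · filter_upwards with x0
      have h2 : 0 ≤ ∑ i, (z i - α * x0.2 i) ^ 2 := Finset.sum_nonneg fun i _ => sq_nonneg _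
      have hexp := aux_exp_le_one hs h2
      have hp := (hp0pos x0).le
      rw [Real.norm_eq_abs, abs_of_nonneg (by positivity)]
      calc c * (Real.exp (-(∑ i, (z i - α * x0.2 i) ^ 2) / (2 * σ2)) * p0 x0)
          ≤ c * (1 * p0 x0) := by
            apply mul_le_mul_of_nonneg_left _ hc.le
            exact mul_le_mul_of_nonneg_right hexp hp
        _ = c * p0 x0 := by ring
  · -- h_diff
    filter_upwards with x0
    exact aux_hasFDerivAt_integrand a hs c (p0 x0) (∑ i, (z i - α * x0.2 i) ^ 2)
      (fun i => α * x0.1 i) w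

end Inner

section Outer

variable {a bb : ℕ} {α σ2 c : ℝ}

local notation "W" => (Fin a → ℝ) × (Fin bb → ℝ)
local notation "Z" => (Fin bb → ℝ)

lemma aux_pos (hs : 0 < σ2) (hc : 0 < c)
    (p0 : W → ℝ) (hp0pos : ∀ x, 0 < p0 x) (hp0int : Integrable p0)
    (z : Fin bb → ℝ) (w : Fin a → ℝ) :
    0 < ∫ x0 : W,
      c * Real.exp (-((∑ i, (w i - α * x0.1 i) ^ 2) + ∑ i, (z i - α * x0.2 i) ^ 2) / (2 * σ2))
        * p0 x0 := by
  have hf := aux_integrable_F (α := α) hs hc p0 hp0pos hp0int z w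
  have hpos : ∀ x0 : W, 0 < c * Real.exp
      (-((∑ i, (w i - α * x0.1 i) ^ 2) + ∑ i, (z i - α * x0.2 i) ^ 2) / (2 * σ2)) * p0 x0 :=
    fun x0 => mul_pos (mul_pos hc (Real.exp_pos _)) (hp0pos x0)
  rw [integral_pos_iff_support_of_nonneg_ae (ae_of_all _ fun x0 => (hpos x0).le) hf]
  have h : Function.support (fun x0 : W => c * Real.exp
      (-((∑ i, (w i - α * x0.1 i) ^ 2) + ∑ i, (z i - α * x0.2 i) ^ 2) / (2 * σ2)) * p0 x0)
      = Set.univ := by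
    ext x0; simp only [Function.mem_support, Set.mem_univ, iff_true]
    exact (hpos x0).ne'
  rw [h]
  exact isOpen_univ.measure_pos volume Set.univ_nonempty

lemma aux_joint_meas (hs : 0 < σ2)
    (p0 : W → ℝ) (hp0int : Integrable p0) (v : Fin a → ℝ) :
    AEStronglyMeasurable (fun p : Z × W =>
      c * Real.exp (-((∑ i, (v i - α * p.2.1 i) ^ 2) + ∑ i, (p.1 i - α * p.2.2 i) ^ 2) / (2 * σ2))
        * p0 p.2) ((volume : Measure Z).prod (volume : Measure W)) := by
  have hcont : Continuous (fun p : Z × W =>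
      c * Real.exp (-((∑ i, (v i - α * p.2.1 i) ^ 2) + ∑ i, (p.1 i - α * p.2.2 i) ^ 2)
        / (2 * σ2))) := by
    apply continuous_const.mul
    apply Real.continuous_exp.comp
    apply Continuous.div_const
    apply Continuous.neg
    apply Continuous.add
    · apply continuous_finset_sum
      intro i _
      exact (continuous_const.sub (continuous_const.mul
        ((continuous_apply i).comp (continuous_fst.comp continuous_snd)))).pow 2
    · apply continuous_finset_sum
      intro i _
      exact (((continuous_apply i).comp continuous_fst).sub (continuous_const.mul
        ((continuous_apply i).comp (continuous_snd.comp continuous_snd)))).pow 2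
  exact hcont.aestronglyMeasurable.mul hp0int.1.comp_snd

lemma aux_joint_int (hs : 0 < σ2) (hc : 0 < c)
    (p0 : W → ℝ) (hp0pos : ∀ x, 0 < p0 x) (hp0int : Integrable p0) :
    Integrable (fun p : Z × W =>
      c * (Real.exp (-(∑ i, (p.1 i - α * p.2.2 i) ^ 2) / (2 * σ2)) * p0 p.2))
      ((volume : Measure Z).prod (volume : Measure W)) := by
  have hmeas : AEStronglyMeasurable (fun p : Z × W =>
      c * (Real.exp (-(∑ i, (p.1 i - α * p.2.2 i) ^ 2) / (2 * σ2)) * p0 p.2))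
      ((volume : Measure Z).prod (volume : Measure W)) := by
    have hcont : Continuous (fun p : Z × W =>
        Real.exp (-(∑ i, (p.1 i - α * p.2.2 i) ^ 2) / (2 * σ2))) := by
      apply Real.continuous_exp.comp
      apply Continuous.div_const
      apply Continuous.neg
      apply continuous_finset_sum
      intro i _
      exact (((continuous_apply i).comp continuous_fst).sub (continuous_const.mul
        ((continuous_apply i).comp (continuous_snd.comp continuous_snd)))).pow 2
    exact (hcont.aestronglyMeasurable.mul hp0int.1.comp_snd).const_mul c
  refine (integrable_prod_iff' hmeas).2 ⟨?_, ?_⟩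
  · filter_upwards with x0
    exact ((aux_gauss_integrable bb hs (fun i => α * x0.2 i)).mul_const (p0 x0)).const_mul c
  · have heq : (fun x0 : W => ∫ z : Z, ‖c * (Real.exp
        (-(∑ i, (z i - α * x0.2 i) ^ 2) / (2 * σ2)) * p0 x0)‖)
        = fun x0 : W => (c * (∫ u : ℝ, Real.exp (-u ^ 2 / (2 * σ2))) ^ bb) * p0 x0 := by
      funext x0
      have h1 : ∀ z : Z, ‖c * (Real.exp (-(∑ i, (z i - α * x0.2 i) ^ 2) / (2 * σ2)) * p0 x0)‖
          = c * (Real.exp (-(∑ i, (z i - α * x0.2 i) ^ 2) / (2 * σ2)) * p0 x0) := by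
        intro z
        have := (hp0pos x0).le
        rw [Real.norm_eq_abs, abs_of_nonneg (by positivity)]
      simp_rw [h1]
      rw [integral_const_mul, integral_mul_const,
        aux_gauss_integral bb hs (fun i => α * x0.2 i)]
      ring
    rw [heq]
    exact hp0int.const_mul _

lemma aux_outer (hs : 0 < σ2) (hc : 0 < c)
    (p0 : W → ℝ) (hp0pos : ∀ x, 0 < p0 x) (hp0int : Integrable p0)
    (y : Fin a → ℝ)
    (hint : Integrable (fun z : Z => ∫ x0 : W,
      c * Real.exp (-((∑ i, (y i - α * x0.1 i) ^ 2) + ∑ i, (z i - α * x0.2 i) ^ 2) / (2 * σ2))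
        * p0 x0)) :
    Integrable (fun z : Z => ∫ x0 : W,
      (c * Real.exp (-((∑ i, (y i - α * x0.1 i) ^ 2) + ∑ i, (z i - α * x0.2 i) ^ 2) / (2 * σ2))
          * p0 x0) •
        ∑ i, (-(y i - α * x0.1 i) / σ2) •
          ContinuousLinearMap.proj (R := ℝ) (φ := fun _ : Fin a => ℝ) i)
    ∧ HasFDerivAt (fun y' : Fin a → ℝ => ∫ z : Z, ∫ x0 : W,
        c * Real.exp (-((∑ i, (y' i - α * x0.1 i) ^ 2) + ∑ i, (z i - α * x0.2 i) ^ 2) / (2 * σ2))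
          * p0 x0)
      (∫ z : Z, ∫ x0 : W,
        (c * Real.exp (-((∑ i, (y i - α * x0.1 i) ^ 2) + ∑ i, (z i - α * x0.2 i) ^ 2) / (2 * σ2))
            * p0 x0) •
          ∑ i, (-(y i - α * x0.1 i) / σ2) •
            ContinuousLinearMap.proj (R := ℝ) (φ := fun _ : Fin a => ℝ) i) y := by
  apply hasFDerivAt_integral_of_dominated_loc_of_lip
    (μ := (volume : Measure Z))
    (F := fun (y' : Fin a → ℝ) (z : Z) => ∫ x0 : W,
      c * Real.exp (-((∑ i, (y' i - α * x0.1 i) ^ 2) + ∑ i, (z i - α * x0.2 i) ^ 2) / (2 * σ2))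
        * p0 x0)
    (F' := fun z : Z => ∫ x0 : W,
      (c * Real.exp (-((∑ i, (y i - α * x0.1 i) ^ 2) + ∑ i, (z i - α * x0.2 i) ^ 2) / (2 * σ2))
          * p0 x0) •
        ∑ i, (-(y i - α * x0.1 i) / σ2) •
          ContinuousLinearMap.proj (R := ℝ) (φ := fun _ : Fin a => ℝ) i)
    (bound := fun z : Z => ((a : ℝ) * Real.sqrt σ2 / σ2) * ∫ x0 : W,
      c * (Real.exp (-(∑ i, (z i - α * x0.2 i) ^ 2) / (2 * σ2)) * p0 x0))
    (s := Metric.ball y 1) (Metric.ball_mem_nhds y one_pos)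
  · -- hF_meas
    filter_upwards with y'
    exact (aux_joint_meas hs p0 hp0int y').integral_prod_right'
  · exact hint
  · -- hF'_meas
    have hcontLL : Continuous (fun p : Z × W => ∑ i, (-(y i - α * p.2.1 i) / σ2) •
        ContinuousLinearMap.proj (R := ℝ) (φ := fun _ : Fin a => ℝ) i) := by
      apply continuous_finset_sum
      intro i _
      exact Continuous.smul (by fun_prop :
          Continuous fun p : Z × W => -(y i - α * p.2.1 i) / σ2)
        continuous_const
    exact (((aux_joint_meas hs p0 hp0int y).smul
      hcontLL.aestronglyMeasurable)).integral_prod_right'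
  · -- h_lip
    filter_upwards with z
    apply (convex_ball y 1).lipschitzOnWith_of_nnnorm_hasFDerivWithin_le
      (f' := fun y' : Fin a → ℝ => ∫ x0 : W,
        (c * Real.exp (-((∑ i, (y' i - α * x0.1 i) ^ 2) + ∑ i, (z i - α * x0.2 i) ^ 2) / (2 * σ2))
            * p0 x0) •
          ∑ i, (-(y' i - α * x0.1 i) / σ2) •
            ContinuousLinearMap.proj (R := ℝ) (φ := fun _ : Fin a => ℝ) i)
    · intro y' _
      exact (aux_inner hs hc p0 hp0pos hp0int z y').2.hasFDerivWithinAt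
    · intro y' _
      rw [← NNReal.coe_le_coe, coe_nnnorm, Real.coe_nnabs]
      have hb : Integrable (fun x0 : W =>
          ((a : ℝ) * Real.sqrt σ2 / σ2) * (c * (Real.exp
            (-(∑ i, (z i - α * x0.2 i) ^ 2) / (2 * σ2)) * p0 x0))) :=
        (aux_bound_int hs hc p0 hp0pos hp0int z).const_mul _
      calc ‖∫ x0 : W, (c * Real.exp (-((∑ i, (y' i - α * x0.1 i) ^ 2)
              + ∑ i, (z i - α * x0.2 i) ^ 2) / (2 * σ2)) * p0 x0) •
            ∑ i, (-(y' i - α * x0.1 i) / σ2) •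
              ContinuousLinearMap.proj (R := ℝ) (φ := fun _ : Fin a => ℝ) i‖
          ≤ ∫ x0 : W, ((a : ℝ) * Real.sqrt σ2 / σ2) * (c * (Real.exp
              (-(∑ i, (z i - α * x0.2 i) ^ 2) / (2 * σ2)) * p0 x0)) := by
            apply norm_integral_le_of_norm_le hb
            filter_upwards with x0
            exact aux_norm_le a hs (∑ i, (z i - α * x0.2 i) ^ 2) hc.le (hp0pos x0).le
              (fun i => α * x0.1 i) y'
        _ = ((a : ℝ) * Real.sqrt σ2 / σ2) * ∫ x0 : W, c * (Real.exp
              (-(∑ i, (z i - α * x0.2 i) ^ 2) / (2 * σ2)) * p0 x0) := integral_const_mul _ _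
        _ ≤ |((a : ℝ) * Real.sqrt σ2 / σ2) * ∫ x0 : W, c * (Real.exp
              (-(∑ i, (z i - α * x0.2 i) ^ 2) / (2 * σ2)) * p0 x0)| := le_abs_self _
  · -- bound integrable
    apply Integrable.const_mul
    exact (aux_joint_int hs hc p0 hp0pos hp0int).integral_prod_left
  · -- h_diff
    filter_upwards with z
    exact (aux_inner hs hc p0 hp0pos hp0int z y).2

end Outer

/-- The conditional expectation of the `j`-th score component of the OU marginal `p_t`
given the coordinates `x_V` equals the `j`-th score of the marginal density of `x_V`:
`E_{p_t}[∇_j log p_t(x) | x_V] = ∇_j log p_t(x_V)` (block `j` contained in `V`). -/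
theorem stmt_12 (a bb : ℕ) (t : ℝ) (ht : 0 < t)
    (α σ2 : ℝ) (hα : α = Real.exp (-t)) (hσ2 : σ2 = 1 - Real.exp (-2 * t))
    (p0 : (Fin a → ℝ) × (Fin bb → ℝ) → ℝ) (hp0pos : ∀ x, 0 < p0 x)
    (hp0int : Integrable p0)
    -- the OU marginal density at time `t`, written in the splitting `x = (x_V, x_{V^⊥})`
    (pt : (Fin a → ℝ) → (Fin bb → ℝ) → ℝ)
    (hpt : pt = fun y z => ∫ x0 : (Fin a → ℝ) × (Fin bb → ℝ),
        (2 * π * σ2) ^ (-((a : ℝ) + bb) / 2) *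
          Real.exp (-((∑ i, (y i - α * x0.1 i) ^ 2) + ∑ i, (z i - α * x0.2 i) ^ 2) /
            (2 * σ2)) * p0 x0)
    (j : Fin a) (y : Fin a → ℝ)
    (hden : 0 < ∫ z, pt y z)
    (hint : Integrable (fun z => pt y z))
    (hint2 : Integrable (fun z =>
        fderiv ℝ (fun y' => Real.log (pt y' z)) y (Pi.single j 1) * pt y z)) :
    (∫ z, fderiv ℝ (fun y' => Real.log (pt y' z)) y (Pi.single j 1) * pt y z) /
        (∫ z, pt y z)
      = fderiv ℝ (fun y' => Real.log (∫ z, pt y' z)) y (Pi.single j 1) := by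
  have hs : 0 < σ2 := by
    rw [hσ2]
    have h1 : Real.exp (-2 * t) < 1 := Real.exp_lt_one_iff.2 (by linarith)
    linarith
  set c : ℝ := (2 * π * σ2) ^ (-((a : ℝ) + bb) / 2) with hc_def
  have hc : 0 < c := Real.rpow_pos_of_pos (by positivity) _
  simp only [hpt] at hden hint ⊢
  have outer := aux_outer (α := α) hs hc p0 hp0pos hp0int y hint
  have hnum : ∀ z : Fin bb → ℝ,
      fderiv ℝ (fun y' : Fin a → ℝ => Real.log (∫ x0 : (Fin a → ℝ) × (Fin bb → ℝ),
          c * Real.exp (-((∑ i, (y' i - α * x0.1 i) ^ 2) + ∑ i, (z i - α * x0.2 i) ^ 2)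
            / (2 * σ2)) * p0 x0)) y (Pi.single j 1)
        * (∫ x0 : (Fin a → ℝ) × (Fin bb → ℝ),
            c * Real.exp (-((∑ i, (y i - α * x0.1 i) ^ 2) + ∑ i, (z i - α * x0.2 i) ^ 2)
              / (2 * σ2)) * p0 x0)
      = (∫ x0 : (Fin a → ℝ) × (Fin bb → ℝ),
          (c * Real.exp (-((∑ i, (y i - α * x0.1 i) ^ 2) + ∑ i, (z i - α * x0.2 i) ^ 2)
              / (2 * σ2)) * p0 x0) •
            ∑ i, (-(y i - α * x0.1 i) / σ2) •
              ContinuousLinearMap.proj (R := ℝ) (φ := fun _ : Fin a => ℝ) i) (Pi.single j 1) := by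
    intro z
    have hF := (aux_inner (α := α) hs hc p0 hp0pos hp0int z y).2
    have hpos := aux_pos (α := α) hs hc p0 hp0pos hp0int z y
    have hlog := hF.log hpos.ne'
    rw [hlog.fderiv]
    simp only [ContinuousLinearMap.smul_apply, smul_eq_mul]
    rw [mul_comm, ← mul_assoc, mul_inv_cancel₀ hpos.ne', one_mul]
  have hlog2 := outer.2.log hden.ne'
  rw [hlog2.fderiv]
  simp only [hnum, ContinuousLinearMap.smul_apply, smul_eq_mul]
  rw [ContinuousLinearMap.integral_apply outer.1 (Pi.single j 1)]
  rw [div_eq_inv_mul]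
end
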